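/- arXiv:0805.4472 — 3 statements merged into one kernel-verified Lean document; each statement's English description precedes it below -/
import Mathlib

section
/- For every t ∈ ℝ and every T > 0, lim_{σ→∞} Σ_{i∈ℤ} p_i(t,t+T) = λT. -/
/-!
Substituting `u = λx - i` turns `p_i(t, t+T)` into the mass that the spread-out density
`u ↦ (λσ)⁻¹ f(u / (λσ))` puts on the window `(λt - i, λt - i + λT]`, so `∑ p_i` is that mass counted
with multiplicity by the `ℤ`-translates of one window of length `L = λT`. Write `L = n + θ` with
`n ∈ ℕ` and `θ ∈ [0, 1]`: `n` unit windows tile `ℝ` exactly and contribute `n`, while the windows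
of length `θ` are disjoint and form a `1`-periodic set of density `θ`. A density spread out over the
scale `λσ → ∞` puts mass `θ + o(1)` on that set: for continuous compactly supported densities
because they are almost constant on each unit cell, and in general by `L¹`-approximation.
-/

open MeasureTheory Filter Set Topology

noncomputable section

def rescale (k : ℝ) (f : ℝ → ℝ) (u : ℝ) : ℝ := k⁻¹ * f (u / k)

def windowSum (g : ℝ → ℝ) (c L : ℝ) : ℝ := ∑' i : ℤ, ∫ u in c + i..c + i + L, g u

end

section

variable {f g : ℝ → ℝ}

theorem integral_rescale (g : ℝ → ℝ) {k : ℝ} (hk : 0 < k) : ∫ u, rescale k g u = ∫ u, g u := by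
  simp only [rescale, integral_const_mul, Measure.integral_comp_div, abs_of_pos hk, smul_eq_mul,
    inv_mul_cancel_left₀ hk.ne']

theorem MeasureTheory.Integrable.rescale (hg : Integrable g) {k : ℝ} (hk : k ≠ 0) :
    Integrable (rescale k g) :=
  (hg.comp_div hk).const_mul _

theorem hasSum_intervalIntegral_window (hg : Integrable g) (c : ℝ) {θ : ℝ} (hθ₀ : 0 ≤ θ)
    (hθ₁ : θ ≤ 1) :
    HasSum (fun i : ℤ => ∫ u in c + i..c + i + θ, g u)
      (∫ u in ⋃ i : ℤ, Ioc (c + i) (c + i + θ), g u) := by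
  simp_rw [intervalIntegral.integral_of_le (le_add_of_nonneg_right hθ₀)]
  refine hasSum_integral_iUnion (fun _ => measurableSet_Ioc) ?_ hg.integrableOn
  exact (pairwise_disjoint_Ioc_add_intCast c).mono fun i j h =>
    h.mono (Ioc_subset_Ioc_right (by linarith)) (Ioc_subset_Ioc_right (by linarith))

theorem abs_windowSum_sub_le (hf : Integrable f) (hg : Integrable g) (c : ℝ) {θ : ℝ}
    (hθ₀ : 0 ≤ θ) (hθ₁ : θ ≤ 1) :
    |windowSum f c θ - windowSum g c θ| ≤ ∫ u, |f u - g u| := by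
  rw [windowSum, windowSum, (hasSum_intervalIntegral_window hf c hθ₀ hθ₁).tsum_eq,
    (hasSum_intervalIntegral_window hg c hθ₀ hθ₁).tsum_eq,
    ← integral_sub hf.integrableOn hg.integrableOn]
  exact abs_integral_le_integral_abs.trans
    (setIntegral_le_integral (hf.sub hg).abs (ae_of_all _ fun _ => abs_nonneg _))

theorem hasSum_intervalIntegral_window_add_nat (hg : Integrable g) (c : ℝ) {θ : ℝ}
    (hθ₀ : 0 ≤ θ) (hθ₁ : θ ≤ 1) (n : ℕ) :
    HasSum (fun i : ℤ => ∫ u in c + i..c + i + (n + θ), g u)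
      (n * (∫ u, g u) + windowSum g c θ) := by
  induction n with
  | zero =>
    simpa only [Nat.cast_zero, zero_add, zero_mul, windowSum] using
      (hasSum_intervalIntegral_window hg c hθ₀ hθ₁).summable.hasSum
  | succ n ih =>
    have hshift := (Equiv.addRight (1 : ℤ)).hasSum_iff.mpr ih
    rw [show ((n + 1 : ℕ) : ℝ) * (∫ u, g u) + windowSum g c θ
        = (∫ u, g u) + (n * (∫ u, g u) + windowSum g c θ) by push_cast; ring]
    refine ((hg.hasSum_intervalIntegral c).add hshift).congr_fun fun i => ?_
    simp only [Function.comp_apply, Equiv.coe_addRight, Int.cast_add, Int.cast_one]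
    rw [← add_assoc c, intervalIntegral.integral_add_adjacent_intervals hg.intervalIntegrable
      hg.intervalIntegrable]
    push_cast
    ring_nf

theorem abs_intervalIntegral_window_sub_le {φ : ℝ → ℝ} {a p η θ : ℝ}
    (hφ : IntervalIntegrable φ volume a (a + 1)) (hθ₀ : 0 ≤ θ) (hθ₁ : θ ≤ 1)
    (hclose : ∀ u ∈ Icc a (a + 1), |φ u - p| ≤ η) :
    |(∫ u in a..a + θ, φ u) - θ * ∫ u in a..a + 1, φ u| ≤ 2 * η := by
  have hsub : ∀ b, a ≤ b → b ≤ a + 1 →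
      |(∫ u in a..b, φ u) - (b - a) * p| ≤ η * (b - a) := by
    intro b hab hb
    have hφb : IntervalIntegrable φ volume a b :=
      hφ.mono_set (uIcc_subset_uIcc_left (by simp [uIcc_of_le, hab, hb]))
    have := intervalIntegral.norm_integral_le_of_norm_le_const (a := a) (b := b)
      (f := fun u => φ u - p) fun u hu => by
        rw [uIoc_of_le hab] at hu
        exact hclose u ⟨hu.1.le, hu.2.trans hb⟩
    rwa [intervalIntegral.integral_sub hφb intervalIntegrable_const,
      intervalIntegral.integral_const, smul_eq_mul, Real.norm_eq_abs, abs_of_nonneg (sub_nonneg.2 hab)] at this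
  have hη : 0 ≤ η := (abs_nonneg _).trans (hclose a ⟨le_rfl, by linarith⟩)
  have h1 := hsub (a + θ) (by linarith) (by linarith)
  have h2 := hsub (a + 1) (by linarith) le_rfl
  simp only [add_sub_cancel_left, one_mul, mul_one] at h1 h2
  calc |(∫ u in a..a + θ, φ u) - θ * ∫ u in a..a + 1, φ u|
      = |((∫ u in a..a + θ, φ u) - θ * p) - θ * ((∫ u in a..a + 1, φ u) - p)| := by ring_nf
    _ ≤ η * θ + θ * η := by
      refine (abs_sub _ _).trans (add_le_add h1 ?_)
      rw [abs_mul, abs_of_nonneg hθ₀]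
      exact mul_le_mul_of_nonneg_left h2 hθ₀
    _ ≤ 2 * η := by nlinarith

theorem abs_div_sub_div_le_inv_of_mem_Icc {a u v k : ℝ} (hk : 0 < k) (hu : u ∈ Icc a (a + 1))
    (hv : v ∈ Icc a (a + 1)) : |u / k - v / k| ≤ k⁻¹ := by
  rw [← sub_div, abs_div, abs_of_pos hk, div_eq_mul_inv]
  refine mul_le_of_le_one_left (inv_nonneg.2 hk.le) ?_
  rw [abs_le]
  constructor <;> linarith [hu.1, hu.2, hv.1, hv.2]

-- A cell on which `rescale k g` does not vanish lies in the support of the rescaled majorant, so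
-- these bounds sum to the mass of the majorant, which does not depend on `k`.
theorem abs_intervalIntegral_window_rescale_sub_le (hg : Integrable g) {R η δ k : ℝ}
    (hgR : ∀ x : ℝ, R ≤ ‖x‖ → g x = 0) (hUC : ∀ ⦃x y : ℝ⦄, dist x y < δ → dist (g x) (g y) < η)
    (hk : 1 ≤ k) (hkδ : k⁻¹ < δ) (a : ℝ) {θ : ℝ} (hθ₀ : 0 ≤ θ) (hθ₁ : θ ≤ 1) :
    |(∫ u in a..a + θ, rescale k g u) - θ * ∫ u in a..a + 1, rescale k g u| ≤
      ∫ u in a..a + 1, rescale k ((Icc (-(R + 1)) (R + 1)).indicator fun _ => 2 * η) u := by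
  have hk₀ : 0 < k := by linarith
  have hη : 0 < η := by
    simpa using hUC (x := 0) (y := 0) (by simpa using (inv_pos.2 hk₀).trans hkδ)
  have hgk := (hg.rescale hk₀.ne').intervalIntegrable (a := a) (b := a + 1)
  by_cases hin : ∀ u ∈ Icc a (a + 1), u / k ∈ Icc (-(R + 1)) (R + 1)
  · have hW : ∫ u in a..a + 1, rescale k ((Icc (-(R + 1)) (R + 1)).indicator fun _ => 2 * η) u
        = 2 * (k⁻¹ * η) := by
      rw [intervalIntegral.integral_congr (g := fun _ => k⁻¹ * (2 * η)) fun u hu => ?_]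
      · simp only [intervalIntegral.integral_const, smul_eq_mul]
        ring
      · rw [uIcc_of_le (by linarith)] at hu
        simp only [rescale, indicator_of_mem (hin u hu)]
    rw [hW]
    refine abs_intervalIntegral_window_sub_le (p := rescale k g a) hgk hθ₀ hθ₁ fun u hu => ?_
    have hdist : dist (u / k) (a / k) < δ :=
      (abs_div_sub_div_le_inv_of_mem_Icc hk₀ hu ⟨le_rfl, by linarith⟩).trans_lt hkδ
    rw [rescale, rescale, ← mul_sub, abs_mul, abs_inv, abs_of_pos hk₀]
    exact mul_le_mul_of_nonneg_left (hUC hdist).le (inv_nonneg.2 hk₀.le)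
  · push Not at hin
    obtain ⟨u₀, hu₀, hout⟩ := hin
    have hvanish : ∀ u ∈ Icc a (a + 1), |rescale k g u - 0| ≤ 0 := by
      intro u hu
      rw [rescale, hgR _ ?_, mul_zero, sub_zero, abs_zero]
      rw [mem_Icc, ← abs_le, not_le] at hout
      have hclose := abs_div_sub_div_le_inv_of_mem_Icc hk₀ hu hu₀
      rw [Real.norm_eq_abs]
      linarith [abs_sub_abs_le_abs_sub (u₀ / k) (u / k), abs_sub_comm (u / k) (u₀ / k),
        inv_le_one_of_one_le₀ hk]
    refine (abs_intervalIntegral_window_sub_le hgk hθ₀ hθ₁ hvanish).trans ?_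
    rw [mul_zero]
    refine intervalIntegral.integral_nonneg (by linarith) fun u _ => ?_
    exact mul_nonneg (inv_nonneg.2 hk₀.le) (indicator_nonneg (fun _ _ => by positivity) _)

theorem tendsto_windowSum_rescale_of_hasCompactSupport (hg : Continuous g)
    (hgc : HasCompactSupport g) (c : ℝ) {θ : ℝ} (hθ₀ : 0 ≤ θ) (hθ₁ : θ ≤ 1) :
    Tendsto (fun k => windowSum (rescale k g) c θ) atTop (𝓝 (θ * ∫ u, g u)) := by
  obtain ⟨R, hR, hgR⟩ := hgc.exists_pos_le_norm
  have hgi : Integrable g := hg.integrable_of_hasCompactSupport hgc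
  rw [Metric.tendsto_atTop]
  intro ε hε
  obtain ⟨δ, hδ, hUC⟩ := Metric.uniformContinuous_iff.mp
    (hgc.uniformContinuous_of_continuous hg) (ε / (8 * (R + 1))) (by positivity)
  refine ⟨max 1 (2 / δ), fun k hk => ?_⟩
  have hk₁ : 1 ≤ k := le_of_max_le_left hk
  have hkδ : k⁻¹ < δ := by
    have : 2 / δ ≤ k := le_of_max_le_right hk
    rw [inv_lt_comm₀ (by linarith) hδ]
    calc δ⁻¹ < 2 / δ := by rw [inv_eq_one_div]; gcongr; norm_num
      _ ≤ k := this
  set W : ℝ → ℝ := (Icc (-(R + 1)) (R + 1)).indicator fun _ => 2 * (ε / (8 * (R + 1)))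
  have hWi : Integrable W := (integrableOn_const measure_Icc_lt_top.ne).integrable_indicator
    measurableSet_Icc
  have hW : ∫ u, W u = ε / 2 := by
    rw [integral_indicator_const _ measurableSet_Icc, Real.volume_real_Icc_of_le (by linarith),
      smul_eq_mul]
    field_simp
    ring
  have hk₀ : 0 < k := by linarith
  have hgk := hgi.rescale hk₀.ne'
  have hdefect := (((hasSum_intervalIntegral_window hgk c hθ₀ hθ₁).summable.hasSum).sub
    ((hgk.hasSum_intervalIntegral c).mul_left θ)).norm_le_of_bounded
    ((hWi.rescale hk₀.ne').hasSum_intervalIntegral c) fun i =>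
      abs_intervalIntegral_window_rescale_sub_le hgi hgR hUC hk₁ hkδ (c + i) hθ₀ hθ₁
  rw [integral_rescale _ hk₀, integral_rescale _ hk₀, hW] at hdefect
  rw [Real.dist_eq]
  exact hdefect.trans_lt (by linarith)

theorem tendsto_windowSum_rescale_of_le_one (hf : Integrable f) (c : ℝ) {θ : ℝ} (hθ₀ : 0 ≤ θ)
    (hθ₁ : θ ≤ 1) :
    Tendsto (fun k => windowSum (rescale k f) c θ) atTop (𝓝 (θ * ∫ u, f u)) := by
  rw [Metric.tendsto_atTop]
  intro ε hε
  obtain ⟨g, hgc, hfg, hg, hgi⟩ := hf.exists_hasCompactSupport_integral_sub_le (ε := ε / 3)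
    (by positivity)
  obtain ⟨N, hN⟩ := Metric.tendsto_atTop.mp
    (tendsto_windowSum_rescale_of_hasCompactSupport hg hgc c hθ₀ hθ₁) (ε / 3) (by positivity)
  simp only [Real.norm_eq_abs] at hfg
  refine ⟨max N 1, fun k hk => ?_⟩
  have hk₀ : 0 < k := lt_of_lt_of_le one_pos (le_of_max_le_right hk)
  have hwindow : |windowSum (rescale k f) c θ - windowSum (rescale k g) c θ| ≤ ε / 3 := by
    refine (abs_windowSum_sub_le (hf.rescale hk₀.ne') (hgi.rescale hk₀.ne') c hθ₀ hθ₁).trans ?_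
    have hres : ∀ u, |rescale k f u - rescale k g u| = rescale k (fun u => |f u - g u|) u := by
      intro u
      rw [rescale, rescale, rescale, ← mul_sub, abs_mul, abs_of_pos (inv_pos.2 hk₀)]
    simpa only [hres, integral_rescale _ hk₀] using hfg
  have hmass : |θ * (∫ u, f u) - θ * ∫ u, g u| ≤ ε / 3 := by
    rw [← mul_sub, abs_mul, abs_of_nonneg hθ₀, ← integral_sub hf hgi]
    calc θ * |∫ u, f u - g u| ≤ 1 * ∫ u, |f u - g u| :=
          mul_le_mul hθ₁ abs_integral_le_integral_abs (abs_nonneg _) zero_le_one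
      _ ≤ ε / 3 := by rwa [one_mul]
  have hcompact := hN k (le_of_max_le_left hk)
  rw [Real.dist_eq] at hcompact ⊢
  linarith [abs_sub_le (windowSum (rescale k f) c θ) (windowSum (rescale k g) c θ) (θ * ∫ u, f u),
    abs_sub_le (windowSum (rescale k g) c θ) (θ * ∫ u, g u) (θ * ∫ u, f u),
    abs_sub_comm (θ * ∫ u, g u) (θ * ∫ u, f u)]

theorem tendsto_windowSum_rescale (hf : Integrable f) (c : ℝ) {L : ℝ} (hL : 0 ≤ L) :
    Tendsto (fun k => windowSum (rescale k f) c L) atTop (𝓝 (L * ∫ u, f u)) := by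
  obtain ⟨n, θ, hθ₀, hθ₁, rfl⟩ : ∃ (n : ℕ) (θ : ℝ), 0 ≤ θ ∧ θ ≤ 1 ∧ L = n + θ :=
    ⟨⌊L⌋₊, L - ⌊L⌋₊, sub_nonneg.2 (Nat.floor_le hL), by linarith [Nat.lt_floor_add_one L],
      by ring⟩
  have hsplit : ∀ᶠ k in atTop,
      n * (∫ u, f u) + windowSum (rescale k f) c θ = windowSum (rescale k f) c (n + θ) := by
    filter_upwards [eventually_gt_atTop 0] with k hk
    rw [← integral_rescale f hk]
    exact (hasSum_intervalIntegral_window_add_nat (hf.rescale hk.ne') c hθ₀ hθ₁ n).tsum_eq.symm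
  rw [add_mul]
  exact ((tendsto_windowSum_rescale_of_le_one hf c hθ₀ hθ₁).const_add _).congr' hsplit

end

theorem psra_sum_pi_tendsto_general (lam : ℝ) (hlam : 0 < lam)
    (f : ℝ → ℝ)
    (hf_int : Integrable f) (hf_prob : ∫ x, f x = 1)
    (t T : ℝ) (hT : 0 < T) :
    Tendsto (fun σ : ℝ => ∑' i : ℤ, ∫ x in t..(t + T), (1 / σ) * f ((x - i / lam) / σ))
      atTop (nhds (lam * T)) := by
  have hwindow : ∀ σ > 0, windowSum (rescale (lam * σ) f) (lam * t) (lam * T) =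
      ∑' i : ℤ, ∫ x in t..(t + T), (1 / σ) * f ((x - i / lam) / σ) := by
    intro σ hσ
    rw [windowSum, ← (Equiv.neg ℤ).tsum_eq]
    refine tsum_congr fun i => ?_
    simp only [Equiv.neg_apply, Int.cast_neg]
    have hpt : ∀ x, (1 / σ) * f ((x - i / lam) / σ) = lam * rescale (lam * σ) f (lam * x - i) := by
      intro x
      rw [rescale, show (lam * x - i) / (lam * σ) = (x - i / lam) / σ by field_simp]
      field_simp
    simp_rw [hpt]
    rw [intervalIntegral.integral_const_mul, intervalIntegral.integral_comp_mul_sub _ hlam.ne',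
      smul_eq_mul, mul_inv_cancel_left₀ hlam.ne']
    congr 1; ring
  have hlim := (tendsto_windowSum_rescale hf_int (lam * t) (mul_pos hlam hT).le).comp
    (tendsto_id.const_mul_atTop hlam)
  rw [hf_prob, mul_one] at hlim
  exact hlim.congr' ((eventually_gt_atTop 0).mono hwindow)

/-- For every `t ∈ ℝ` and `T > 0`,
`lim_{σ→∞} Σ_{i∈ℤ} p_i(t,t+T) = λT`, where
`p_i(t,t+T) = ∫_t^{t+T} (1/σ) f_ξ((x - i/λ)/σ) dx`. -/
theorem psra_sum_pi_tendsto (lam M : ℝ) (hlam : 0 < lam)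
    (f : ℝ → ℝ) (hf_cont : Continuous f) (hf_nonneg : ∀ x, 0 ≤ f x)
    (hf_int : Integrable f) (hf_prob : ∫ x, f x = 1)
    (hf_bdd : ∀ x, f x ≤ M)
    (hf_var : Integrable (fun x => x ^ 2 * f x))
    (t T : ℝ) (hT : 0 < T) :
    Tendsto (fun σ : ℝ => ∑' i : ℤ, ∫ x in t..(t + T), (1 / σ) * f ((x - i / lam) / σ))
      atTop (nhds (lam * T)) :=
  psra_sum_pi_tendsto_general lam hlam f hf_int hf_prob t T hT
end

section
/- For every t ∈ ℝ, T > 0 and every complex number z with |z| ≤ 1, lim_{σ→∞} Σ_{i∈ℤ} p_i(t,t+T)·(1 + (z-1)·p_i(t,t+T)·∫_0^1 s/(1+(z-1)(1-s)p_i(t,t+T))² ds) = λT. -/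
/-!
The window probability `p_i` is the `f`-mass of `((λt - i)/(λσ), (λ(t+T) - i)/(λσ)]`. Summed over
`i`, a point `u` is counted `⌊λ(t+T) - λσu⌋ - ⌊λt - λσu⌋ = λT + D(λσu)` times, where `D` is a
bounded `1`-periodic function of mean zero. Hence `Σ p_i = λT + ∫ f(u) D(λσu) du`, and the last
integral tends to `0` by a Riemann–Lebesgue argument: primitives of `D` are bounded, which settles
the case of a continuous compactly supported `f`, and such functions are dense in `L¹`.
Finally `p_i ≤ MT/σ`, and each summand differs from `p_i` by at most `8 p_i²`, so the sum differs
from `Σ p_i` by at most `8MT/σ · Σ p_i → 0`.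
-/

open MeasureTheory Filter Set intervalIntegral Topology

theorem tendsto_zero_of_forall_abs_le_mul_add {α : Type*} {l : Filter α} {F : α → ℝ} {c : ℝ}
    (h : ∀ η > 0, ∃ G : α → ℝ, Tendsto G l (𝓝 0) ∧ ∀ᶠ x in l, |F x| ≤ c * η + |G x|) :
    Tendsto F l (𝓝 0) := by
  rw [Metric.tendsto_nhds]
  intro ε hε
  set η := ε / (2 * (|c| + 1))
  have hη : 0 < η := by positivity
  have hcη : c * η ≤ ε / 2 := calc
    c * η ≤ (|c| + 1) * η := by gcongr; linarith [le_abs_self c]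
    _ = ε / 2 := by simp only [η]; field_simp
  obtain ⟨G, hG, hFG⟩ := h η hη
  filter_upwards [hFG, Metric.tendsto_nhds.1 hG (ε / 2) (half_pos hε)] with x hx hGx
  rw [Real.dist_eq, sub_zero] at hGx ⊢
  linarith

theorem intervalIntegrable_of_abs_le {e : ℝ → ℝ} {C : ℝ} (he : Measurable e)
    (hC : ∀ x, |e x| ≤ C) (a b : ℝ) : IntervalIntegrable e volume a b :=
  (intervalIntegrable_const (c := C)).mono_fun he.aestronglyMeasurable
    (ae_of_all _ fun x => by simpa using (hC x).trans (le_abs_self C))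

theorem IntervalIntegrable.mul_comp_mul {f e : ℝ → ℝ} {a b C : ℝ}
    (hf : IntervalIntegrable f volume a b) (he : Measurable e) (hC : ∀ x, |e x| ≤ C) (σ : ℝ) :
    IntervalIntegrable (fun u => f u * e (σ * u)) volume a b := by
  rw [intervalIntegrable_iff] at hf ⊢
  exact hf.mul_bdd (he.comp (measurable_const_mul σ)).aestronglyMeasurable
    (ae_of_all _ fun u => hC _)

namespace Function.Periodic

variable {e : ℝ → ℝ} {C : ℝ}

theorem intervalIntegral_comp_sub_left {g : ℝ → ℝ} {T : ℝ} (hg : Periodic g T) (a : ℝ) :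
    ∫ y in (0:ℝ)..T, g (a - y) = ∫ y in (0:ℝ)..T, g y := by
  simpa [integral_comp_sub_left] using hg.intervalIntegral_add_eq (a - T) 0

theorem abs_intervalIntegral_le (hper : Periodic e 1) (he : Measurable e)
    (hC : ∀ x, |e x| ≤ C) (hmean : ∫ x in (0:ℝ)..1, e x = 0) (a b : ℝ) :
    |∫ x in a..b, e x| ≤ C := by
  wlog hab : a ≤ b generalizing a b
  · rw [integral_symm, abs_neg]
    exact this b a (le_of_not_ge hab)
  have hint := intervalIntegrable_of_abs_le he hC
  set n := ⌊b - a⌋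
  have hperiods : ∫ x in a..a + n • (1:ℝ), e x = 0 := by
    rw [hper.intervalIntegral_add_zsmul_eq n a hint, hper.intervalIntegral_add_eq a 0, zero_add,
      hmean, smul_zero]
  have hrest : b - (a + n • (1:ℝ)) = Int.fract (b - a) := by
    rw [zsmul_one, Int.fract]; ring
  rw [← integral_add_adjacent_intervals (hint a _) (hint _ b), hperiods, zero_add]
  calc |∫ x in a + n • (1:ℝ)..b, e x| ≤ C * |b - (a + n • (1:ℝ))| := by
        rw [← Real.norm_eq_abs]
        exact norm_integral_le_of_norm_le_const fun x _ => (Real.norm_eq_abs (e x)).symm ▸ hC x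
    _ ≤ C * 1 := by
        rw [hrest, abs_of_nonneg (Int.fract_nonneg _)]
        exact mul_le_mul_of_nonneg_left (Int.fract_lt_one _).le ((abs_nonneg _).trans (hC 0))
    _ = C := mul_one C

theorem abs_intervalIntegral_comp_mul_le (hper : Periodic e 1) (he : Measurable e)
    (hC : ∀ x, |e x| ≤ C) (hmean : ∫ x in (0:ℝ)..1, e x = 0) {σ : ℝ} (hσ : 0 < σ) (a b : ℝ) :
    |∫ u in a..b, e (σ * u)| ≤ C / σ := by
  rw [integral_comp_mul_left _ hσ.ne', smul_eq_mul, abs_mul, abs_inv, abs_of_pos hσ,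
    inv_mul_eq_div]
  exact div_le_div_of_nonneg_right (hper.abs_intervalIntegral_le he hC hmean _ _) hσ.le

theorem abs_intervalIntegral_mul_comp_mul_le (hper : Periodic e 1) (he : Measurable e)
    (hC : ∀ x, |e x| ≤ C) (hmean : ∫ x in (0:ℝ)..1, e x = 0) {f : ℝ → ℝ} {a b η σ : ℝ}
    (hab : a ≤ b) (hf : IntervalIntegrable f volume a b) (hη : ∀ u ∈ Icc a b, |f u - f a| ≤ η)
    (hσ : 0 < σ) :
    |∫ u in a..b, f u * e (σ * u)| ≤ C * (η * (b - a)) + |f a| * (C / σ) := by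
  have hsplit : ∫ u in a..b, f u * e (σ * u) =
      (∫ u in a..b, (f u - f a) * e (σ * u)) + f a * ∫ u in a..b, e (σ * u) := by
    rw [← intervalIntegral.integral_const_mul,
      ← integral_add ((hf.sub intervalIntegrable_const).mul_comp_mul he hC σ)
        (intervalIntegrable_const.mul_comp_mul he hC σ)]
    congr 1 with u
    ring
  have hvar : |∫ u in a..b, (f u - f a) * e (σ * u)| ≤ C * (η * (b - a)) := by
    have := norm_integral_le_of_norm_le_const (a := a) (b := b)
      (f := fun u => (f u - f a) * e (σ * u)) (C := η * C) fun u hu => by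
        rw [Real.norm_eq_abs, abs_mul]
        exact mul_le_mul (hη u (Ioc_subset_Icc_self (by rwa [uIoc_of_le hab] at hu))) (hC _)
          (abs_nonneg _) ((abs_nonneg _).trans (hη a ⟨le_rfl, hab⟩))
    rw [Real.norm_eq_abs, abs_of_nonneg (sub_nonneg.2 hab)] at this
    linarith
  rw [hsplit]
  refine (abs_add_le _ _).trans (add_le_add hvar ?_)
  rw [abs_mul]
  exact mul_le_mul_of_nonneg_left (hper.abs_intervalIntegral_comp_mul_le he hC hmean hσ a b)
    (abs_nonneg _)

theorem abs_intervalIntegral_mul_comp_mul_le_of_dist_le (hper : Periodic e 1)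
    (he : Measurable e) (hC : ∀ x, |e x| ≤ C) (hmean : ∫ x in (0:ℝ)..1, e x = 0) {f : ℝ → ℝ}
    {a b η δ K σ : ℝ} {n : ℕ} (hf : Continuous f) (hab : a ≤ b) (hδ : 0 < δ)
    (hn : (b - a) / δ < n) (hfδ : ∀ x y, dist x y ≤ δ → dist (f x) (f y) ≤ η)
    (hK : ∀ x, |f x| ≤ K) (hσ : 0 < σ) :
    |∫ u in a..b, f u * e (σ * u)| ≤ C * (η * (b - a)) + C * (n * K / σ) := by
  have hn0 : (0:ℝ) < n := (div_nonneg (sub_nonneg.2 hab) hδ.le).trans_lt hn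
  set h := (b - a) / n
  have hh0 : 0 ≤ h := div_nonneg (sub_nonneg.2 hab) hn0.le
  have hhδ : h ≤ δ := by
    rw [div_lt_iff₀ hδ] at hn
    rw [div_le_iff₀ hn0]
    linarith
  set x : ℕ → ℝ := fun j => a + j * h
  have hx0 : x 0 = a := by simp [x]
  have hxn : x n = b := by simp only [x, h]; field_simp; ring
  have hpiece : ∀ j, |∫ u in x j..x (j + 1), f u * e (σ * u)| ≤ C * (η * h) + K * (C / σ) := by
    intro j
    have hstep : x (j + 1) = x j + h := by simp only [x]; push_cast; ring
    refine (hper.abs_intervalIntegral_mul_comp_mul_le he hC hmean (η := η) (by linarith)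
      (hf.intervalIntegrable _ _) (fun u hu => ?_) hσ).trans ?_
    · rw [← Real.dist_eq]
      refine hfδ _ _ ?_
      rw [Real.dist_eq, abs_of_nonneg (by linarith [hu.1])]
      linarith [hu.2]
    · rw [hstep, add_sub_cancel_left]
      exact add_le_add le_rfl (mul_le_mul_of_nonneg_right (hK _)
        (div_nonneg ((abs_nonneg _).trans (hC 0)) hσ.le))
  calc |∫ u in a..b, f u * e (σ * u)|
      = |∑ j ∈ Finset.range n, ∫ u in x j..x (j + 1), f u * e (σ * u)| := by
        rw [sum_integral_adjacent_intervals fun j _ =>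
          (hf.intervalIntegrable _ _).mul_comp_mul he hC σ, hx0, hxn]
    _ ≤ ∑ j ∈ Finset.range n, (C * (η * h) + K * (C / σ)) :=
        (Finset.abs_sum_le_sum_abs _ _).trans (Finset.sum_le_sum fun j _ => hpiece j)
    _ = C * (η * (b - a)) + C * (n * K / σ) := by
        rw [Finset.sum_const, Finset.card_range, nsmul_eq_mul]
        simp only [h]
        field_simp

theorem tendsto_integral_mul_comp_mul_of_hasCompactSupport (hper : Periodic e 1)
    (he : Measurable e) (hC : ∀ x, |e x| ≤ C) (hmean : ∫ x in (0:ℝ)..1, e x = 0) {g : ℝ → ℝ}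
    (hg : Continuous g) (hsupp : HasCompactSupport g) :
    Tendsto (fun σ => ∫ u, g u * e (σ * u)) atTop (𝓝 0) := by
  obtain ⟨R, hR, hgR⟩ := hsupp.exists_pos_le_norm
  obtain ⟨K, hK⟩ := hg.bounded_above_of_compact_support hsupp
  have hsub (σ : ℝ) : ∫ u in -R..R, g u * e (σ * u) = ∫ u, g u * e (σ * u) := by
    refine integral_eq_integral_of_support_subset fun u hu => ?_
    have hgu : g u ≠ 0 := left_ne_zero_of_mul hu
    have : |u| < R := lt_of_not_ge fun h => hgu (hgR u h)
    exact ⟨(abs_lt.1 this).1, (abs_lt.1 this).2.le⟩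
  refine tendsto_zero_of_forall_abs_le_mul_add (c := C * (R - -R)) fun η hη => ?_
  obtain ⟨δ, hδ, hgδ⟩ :=
    Metric.uniformContinuous_iff_le.1 (hsupp.uniformContinuous_of_continuous hg) η hη
  obtain ⟨n, hn⟩ := exists_nat_gt ((R - -R) / δ)
  refine ⟨fun σ => C * (n * K / σ), ?_, ?_⟩
  · simpa using (tendsto_const_nhds.div_atTop tendsto_id).const_mul C
  filter_upwards [eventually_gt_atTop 0] with σ hσ
  rw [← hsub, mul_assoc, mul_comm (R - -R)]
  exact (hper.abs_intervalIntegral_mul_comp_mul_le_of_dist_le he hC hmean hg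
    (by linarith) hδ hn hgδ hK hσ).trans (add_le_add le_rfl (le_abs_self _))

theorem tendsto_integral_mul_comp_mul (hper : Periodic e 1)
    (he : Measurable e) (hC : ∀ x, |e x| ≤ C) (hmean : ∫ x in (0:ℝ)..1, e x = 0) {f : ℝ → ℝ}
    (hf : Integrable f) :
    Tendsto (fun σ => ∫ u, f u * e (σ * u)) atTop (𝓝 0) := by
  refine tendsto_zero_of_forall_abs_le_mul_add (c := C) fun η hη => ?_
  obtain ⟨g, hsupp, hfg, hg, hgi⟩ := hf.exists_hasCompactSupport_integral_sub_le hη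
  refine ⟨fun σ => ∫ u, g u * e (σ * u),
    hper.tendsto_integral_mul_comp_mul_of_hasCompactSupport he hC hmean hg hsupp,
    Eventually.of_forall fun σ => ?_⟩
  have hE : AEStronglyMeasurable (fun u => e (σ * u)) :=
    (he.comp (measurable_const_mul σ)).aestronglyMeasurable
  have hEC : ∀ᵐ u, ‖e (σ * u)‖ ≤ C := ae_of_all _ fun u => hC _
  have hdiff : |(∫ u, f u * e (σ * u)) - ∫ u, g u * e (σ * u)| ≤ C * η := by
    rw [← MeasureTheory.integral_sub (hf.mul_bdd hE hEC) (hgi.mul_bdd hE hEC),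
      ← Real.norm_eq_abs]
    calc ‖∫ u, (f u * e (σ * u) - g u * e (σ * u))‖ ≤ ∫ u, C * ‖f u - g u‖ :=
          norm_integral_le_of_norm_le ((hf.sub hgi).norm.const_mul C) (ae_of_all _ fun u => by
            rw [← sub_mul, norm_mul, mul_comm]
            exact mul_le_mul_of_nonneg_right (hC _) (norm_nonneg _))
      _ = C * ∫ u, ‖f u - g u‖ := integral_const_mul _ _
      _ ≤ C * η := mul_le_mul_of_nonneg_left hfg ((abs_nonneg _).trans (hC 0))
  have := abs_sub_abs_le_abs_sub (∫ u, f u * e (σ * u)) (∫ u, g u * e (σ * u))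
  beta_reduce
  linarith

end Function.Periodic

section Translates

variable {α β s : ℝ}

theorem hasSum_indicator_Ioc_translates (hs : 0 < s) (hαβ : α ≤ β) (g : ℝ → ℝ) (u : ℝ) :
    HasSum (fun i : ℤ => (Ioc ((α - i) / s) ((β - i) / s)).indicator g u)
      (((⌊β - s * u⌋ - ⌊α - s * u⌋ : ℤ) : ℝ) * g u) := by
  have hmem (i : ℤ) :
      u ∈ Ioc ((α - i) / s) ((β - i) / s) ↔ i ∈ Finset.Ioc ⌊α - s * u⌋ ⌊β - s * u⌋ := by
    rw [Set.mem_Ioc, Finset.mem_Ioc, Int.floor_lt, Int.le_floor, div_lt_iff₀ hs, le_div_iff₀ hs]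
    constructor <;> rintro ⟨h₁, h₂⟩ <;> constructor <;> linarith
  have hcard : ((Finset.Ioc ⌊α - s * u⌋ ⌊β - s * u⌋).card : ℝ) =
      ((⌊β - s * u⌋ - ⌊α - s * u⌋ : ℤ) : ℝ) := by
    rw [Int.card_Ioc, ← Int.cast_natCast,
      Int.toNat_of_nonneg (sub_nonneg.2 (Int.floor_mono (by linarith)))]
  have hsum : HasSum (fun i : ℤ => (Ioc ((α - i) / s) ((β - i) / s)).indicator g u)
      (∑ i ∈ Finset.Ioc ⌊α - s * u⌋ ⌊β - s * u⌋,
        (Ioc ((α - i) / s) ((β - i) / s)).indicator g u) :=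
    hasSum_sum_of_ne_finset_zero fun i hi => indicator_of_notMem (mt (hmem i).1 hi) g
  rwa [Finset.sum_congr rfl fun i hi => indicator_of_mem ((hmem i).2 hi) g, Finset.sum_const,
    nsmul_eq_mul, hcard] at hsum

theorem hasSum_intervalIntegral_translates {f : ℝ → ℝ} (hf : Integrable f) (hs : 0 < s)
    (hαβ : α ≤ β) :
    HasSum (fun i : ℤ => ∫ u in (α - i) / s..(β - i) / s, f u)
      (∫ u, ((⌊β - s * u⌋ - ⌊α - s * u⌋ : ℤ) : ℝ) * f u) := by
  set N : ℝ → ℝ := fun u => ((⌊β - s * u⌋ - ⌊α - s * u⌋ : ℤ) : ℝ)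
  have hN_meas : Measurable N := by fun_prop
  have hN_bdd (u : ℝ) : ‖N u‖ ≤ β - α + 1 := by
    rw [Real.norm_eq_abs, abs_le]
    simp only [N, Int.cast_sub]
    constructor <;> linarith [Int.floor_le (β - s * u), Int.lt_floor_add_one (β - s * u),
      Int.floor_le (α - s * u), Int.lt_floor_add_one (α - s * u)]
  have hsummand (i : ℤ) : ∫ u in (α - i) / s..(β - i) / s, f u =
      ∫ u, (Ioc ((α - i) / s) ((β - i) / s)).indicator f u := by
    rw [intervalIntegral.integral_of_le (by gcongr),
      MeasureTheory.integral_indicator measurableSet_Ioc]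
  have hnorm (u : ℝ) : HasSum (fun i : ℤ => ‖(Ioc ((α - i) / s) ((β - i) / s)).indicator f u‖)
      (N u * ‖f u‖) := by
    simpa only [norm_indicator_eq_indicator_norm] using
      hasSum_indicator_Ioc_translates hs hαβ (fun u => ‖f u‖) u
  simp_rw [hsummand]
  refine hasSum_integral_of_dominated_convergence (fun i u => ‖(Ioc _ _).indicator f u‖)
    (fun i => (hf.indicator measurableSet_Ioc).aestronglyMeasurable)
    (fun i => ae_of_all _ fun u => le_rfl) (ae_of_all _ fun u => (hnorm u).summable) ?_
    (ae_of_all _ (hasSum_indicator_Ioc_translates hs hαβ f))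
  simp_rw [fun u => (hnorm u).tsum_eq]
  exact hf.norm.bdd_mul hN_meas.aestronglyMeasurable (ae_of_all _ hN_bdd)

theorem tendsto_tsum_intervalIntegral_translates {f : ℝ → ℝ} (hf : Integrable f) (hαβ : α ≤ β) :
    Tendsto (fun s => ∑' i : ℤ, ∫ u in (α - i) / s..(β - i) / s, f u) atTop
      (𝓝 ((β - α) * ∫ u, f u)) := by
  set D : ℝ → ℝ := fun y => Int.fract (α - y) - Int.fract (β - y)
  have hcount (y : ℝ) : ((⌊β - y⌋ - ⌊α - y⌋ : ℤ) : ℝ) = β - α + D y := by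
    simp only [D, Int.cast_sub, ← Int.self_sub_fract]
    ring
  have hD_meas : Measurable D := by fun_prop
  have hD_bdd (y : ℝ) : |D y| ≤ 1 := by
    rw [abs_le]
    constructor <;> linarith [Int.fract_nonneg (α - y), Int.fract_lt_one (α - y),
      Int.fract_nonneg (β - y), Int.fract_lt_one (β - y)]
  have hfract_per : Function.Periodic (Int.fract : ℝ → ℝ) 1 := Int.fract_periodic ℝ
  have hD_per : Function.Periodic D 1 := fun y => by simp only [D, ← sub_sub, Int.fract_sub_one]
  have hD_mean : ∫ y in (0:ℝ)..1, D y = 0 := by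
    have hint (a : ℝ) : IntervalIntegrable (fun y => Int.fract (a - y)) volume 0 1 :=
      intervalIntegrable_of_abs_le (by fun_prop) (fun y => by
        rw [abs_of_nonneg (Int.fract_nonneg _)]; exact (Int.fract_lt_one _).le) 0 1
    rw [intervalIntegral.integral_sub (hint α) (hint β),
      hfract_per.intervalIntegral_comp_sub_left, hfract_per.intervalIntegral_comp_sub_left,
      sub_self]
  have hosc := hD_per.tendsto_integral_mul_comp_mul hD_meas hD_bdd hD_mean hf
  have := (tendsto_const_nhds (x := (β - α) * ∫ u, f u)).add hosc
  rw [add_zero] at this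
  refine this.congr' ?_
  filter_upwards [eventually_gt_atTop 0] with s hs
  rw [(hasSum_intervalIntegral_translates hf hs hαβ).tsum_eq]
  simp_rw [hcount, add_mul]
  rw [MeasureTheory.integral_add (hf.const_mul _) ?_, MeasureTheory.integral_const_mul]
  · simp_rw [mul_comm (D _)]
  · exact hf.bdd_mul (hD_meas.comp (measurable_const_mul s)).aestronglyMeasurable
      (ae_of_all _ fun u => (Real.norm_eq_abs _).symm ▸ hD_bdd _)

end Translates

theorem tendsto_tsum_of_norm_sub_le_mul {ι κ : Type*} {l : Filter κ} {p : κ → ι → ℝ}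
    {w : κ → ι → ℂ} {δ : κ → ℝ} {L : ℝ} (hp : Tendsto (fun x => ∑' i, p x i) l (𝓝 L))
    (hδ : Tendsto δ l (𝓝 0))
    (h : ∀ᶠ x in l, Summable (p x) ∧ ∀ i, ‖w x i - p x i‖ ≤ δ x * p x i) :
    Tendsto (fun x => ∑' i, w x i) l (𝓝 (L : ℂ)) := by
  have herr : Tendsto (fun x => ∑' i, (w x i - p x i)) l (𝓝 0) := by
    have hbound := hδ.mul hp
    rw [zero_mul] at hbound
    refine squeeze_zero_norm' ?_ hbound
    filter_upwards [h] with x ⟨hs, hb⟩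
    rw [← tsum_mul_left]
    exact tsum_of_norm_bounded (hs.mul_left _).hasSum hb
  have := ((Complex.continuous_ofReal.tendsto L).comp hp).add herr
  rw [add_zero] at this
  refine this.congr' ?_
  filter_upwards [h] with x ⟨hs, hb⟩
  have hdiff : Summable fun i => w x i - p x i := (hs.mul_left (δ x)).of_norm_bounded hb
  rw [Function.comp_apply, Complex.ofReal_tsum, ← (Complex.summable_ofReal.2 hs).tsum_add hdiff]
  simp

theorem norm_integral_div_one_add_mul_sq_le {a b : ℂ} (hab : ‖a‖ * ‖b‖ ≤ 1 / 2) :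
    ‖∫ s in (0:ℝ)..1, (s : ℂ) / (1 + a * (1 - s) * b) ^ 2‖ ≤ 4 := by
  have hbound : ∀ s ∈ uIoc (0:ℝ) 1, ‖(s : ℂ) / (1 + a * (1 - s) * b) ^ 2‖ ≤ 4 := by
    intro s hs
    rw [uIoc_of_le zero_le_one] at hs
    have hw : ‖a * (1 - s) * b‖ ≤ 1 / 2 := by
      rw [norm_mul, norm_mul, ← Complex.ofReal_one, ← Complex.ofReal_sub, Complex.norm_real,
        Real.norm_of_nonneg (by linarith [hs.2])]
      nlinarith [norm_nonneg a, norm_nonneg b, mul_nonneg (norm_nonneg a) (norm_nonneg b), hs.1]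
    have hden : 1 / 2 ≤ ‖1 + a * (1 - s) * b‖ := by
      have := norm_sub_le (1 + a * (1 - s) * b) (a * (1 - s) * b)
      rw [add_sub_cancel_right, norm_one] at this
      linarith
    rw [norm_div, norm_pow, Complex.norm_real, Real.norm_of_nonneg hs.1.le]
    calc s / ‖1 + a * (1 - s) * b‖ ^ 2 ≤ 1 / (1 / 2) ^ 2 :=
          div_le_div₀ zero_le_one hs.2 (by norm_num) (pow_le_pow_left₀ (by norm_num) hden 2)
      _ = 4 := by norm_num
  simpa using norm_integral_le_of_norm_le_const hbound

theorem norm_mul_one_add_sub_le {z : ℂ} (hz : ‖z‖ ≤ 1) {q : ℝ} (hq₀ : 0 ≤ q) (hq : q ≤ 1 / 4) :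
    ‖(q : ℂ) * (1 + (z - 1) * q *
        ∫ s in (0:ℝ)..1, (s : ℂ) / (1 + (z - 1) * (1 - (s : ℂ)) * q) ^ 2) - q‖ ≤ 8 * q ^ 2 := by
  have hz1 : ‖z - 1‖ ≤ 2 := (norm_sub_le _ _).trans (by rw [norm_one]; linarith)
  have hqn : ‖(q : ℂ)‖ = q := by rw [Complex.norm_real, Real.norm_of_nonneg hq₀]
  have hJ := norm_integral_div_one_add_mul_sq_le (a := z - 1) (b := q)
    (by rw [hqn]; nlinarith [norm_nonneg (z - 1)])
  set J := ∫ s in (0:ℝ)..1, (s : ℂ) / (1 + (z - 1) * (1 - (s : ℂ)) * q) ^ 2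
  calc ‖(q : ℂ) * (1 + (z - 1) * q * J) - q‖ = ‖z - 1‖ * q ^ 2 * ‖J‖ := by
        rw [show (q : ℂ) * (1 + (z - 1) * q * J) - q = (z - 1) * q ^ 2 * J by ring, norm_mul,
          norm_mul, norm_pow, hqn]
    _ ≤ 2 * q ^ 2 * 4 := by gcongr
    _ = 8 * q ^ 2 := by ring

section ArrivalProbability

variable {f : ℝ → ℝ} {lam t T σ M : ℝ}

/-- The paper's `p_i(t, t+T)` for the scaled density `f^{(σ)}(x) = f(x/σ)/σ`. -/
noncomputable def arrivalProb (f : ℝ → ℝ) (lam t T σ : ℝ) (i : ℤ) : ℝ :=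
  ∫ x in t..(t + T), (1 / σ) * f ((x - i / lam) / σ)

theorem arrivalProb_eq (hlam : 0 < lam) (hσ : 0 < σ) (i : ℤ) :
    arrivalProb f lam t T σ i =
      ∫ u in (lam * t - i) / (lam * σ)..(lam * (t + T) - i) / (lam * σ), f u := by
  have harg (x : ℝ) : (x - i / lam) / σ = x / σ - i / (lam * σ) := by field_simp
  have hend (y : ℝ) : y / σ - i / (lam * σ) = (lam * y - i) / (lam * σ) := by field_simp
  rw [arrivalProb, intervalIntegral.integral_const_mul]
  simp_rw [harg]
  rw [intervalIntegral.integral_comp_div_sub _ hσ.ne', hend, hend, smul_eq_mul, ← mul_assoc,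
    one_div_mul_cancel hσ.ne', one_mul]

theorem arrivalProb_nonneg (hf : ∀ x, 0 ≤ f x) (hσ : 0 < σ) (hT : 0 ≤ T) (i : ℤ) :
    0 ≤ arrivalProb f lam t T σ i :=
  intervalIntegral.integral_nonneg (by linarith) fun _ _ => mul_nonneg (by positivity) (hf _)

theorem arrivalProb_le (hf : ∀ x, 0 ≤ f x) (hfM : ∀ x, f x ≤ M) (hσ : 0 < σ) (hT : 0 ≤ T)
    (i : ℤ) : arrivalProb f lam t T σ i ≤ M * T / σ := by
  have hbound : ∀ x ∈ uIoc t (t + T), ‖(1 / σ) * f ((x - i / lam) / σ)‖ ≤ M / σ := fun x _ => by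
    rw [Real.norm_of_nonneg (mul_nonneg (by positivity) (hf _)), one_div_mul_eq_div]
    exact div_le_div_of_nonneg_right (hfM _) hσ.le
  have := (le_abs_self _).trans (norm_integral_le_of_norm_le_const hbound)
  rwa [add_sub_cancel_left, abs_of_nonneg hT, div_mul_eq_mul_div] at this

theorem summable_arrivalProb (hf : Integrable f) (hlam : 0 < lam) (hσ : 0 < σ) (hT : 0 ≤ T) :
    Summable (arrivalProb f lam t T σ) :=
  (hasSum_intervalIntegral_translates hf (mul_pos hlam hσ) (by nlinarith)).summable.congr
    fun i => (arrivalProb_eq hlam hσ i).symm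

theorem tendsto_tsum_arrivalProb (hf : Integrable f) (hf_prob : ∫ x, f x = 1) (hlam : 0 < lam)
    (hT : 0 ≤ T) : Tendsto (fun σ => ∑' i, arrivalProb f lam t T σ i) atTop (𝓝 (lam * T)) := by
  have := (tendsto_tsum_intervalIntegral_translates hf (α := lam * t) (β := lam * (t + T))
    (by nlinarith)).comp (tendsto_id.const_mul_atTop hlam)
  rw [hf_prob, mul_one, show lam * (t + T) - lam * t = lam * T by ring] at this
  refine this.congr' ?_
  filter_upwards [eventually_gt_atTop 0] with σ hσ
  simp only [Function.comp_apply, id, arrivalProb_eq hlam hσ]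

end ArrivalProbability

theorem psra_sum_log_expansion_tendsto_general (lam M : ℝ) (hlam : 0 < lam)
    (f : ℝ → ℝ) (hf_nonneg : ∀ x, 0 ≤ f x)
    (hf_int : Integrable f) (hf_prob : ∫ x, f x = 1)
    (hf_bdd : ∀ x, f x ≤ M)
    (t T : ℝ) (hT : 0 < T) (z : ℂ) (hz : ‖z‖ ≤ 1)
    (p : ℝ → ℤ → ℝ)
    (hp : ∀ σ i, p σ i = ∫ x in t..(t + T), (1 / σ) * f ((x - i / lam) / σ)) :
    Tendsto (fun σ : ℝ => ∑' i : ℤ,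
        (p σ i : ℂ) * (1 + (z - 1) * (p σ i : ℂ) *
          ∫ s in (0:ℝ)..1, (s : ℂ) / (1 + (z - 1) * (1 - (s : ℂ)) * (p σ i : ℂ)) ^ 2))
      atTop (nhds ((lam * T : ℝ) : ℂ)) := by
  obtain rfl : p = arrivalProb f lam t T := funext fun σ => funext (hp σ)
  refine tendsto_tsum_of_norm_sub_le_mul (δ := fun σ => 8 * M * T / σ)
    (tendsto_tsum_arrivalProb (t := t) hf_int hf_prob hlam hT.le)
    (tendsto_const_nhds.div_atTop tendsto_id) ?_
  filter_upwards [eventually_gt_atTop 0, eventually_ge_atTop (4 * M * T)] with σ hσ hσM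
  refine ⟨summable_arrivalProb hf_int hlam hσ hT.le, fun i => ?_⟩
  have hp₀ := arrivalProb_nonneg (lam := lam) (t := t) hf_nonneg hσ hT.le i
  have hpM := arrivalProb_le (lam := lam) (t := t) hf_nonneg hf_bdd hσ hT.le i
  have hp₁ : arrivalProb f lam t T σ i ≤ 1 / 4 :=
    hpM.trans (by rw [div_le_iff₀ hσ]; linarith)
  calc _ ≤ 8 * arrivalProb f lam t T σ i ^ 2 := norm_mul_one_add_sub_le hz hp₀ hp₁
    _ = 8 * (arrivalProb f lam t T σ i * arrivalProb f lam t T σ i) := by ring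
    _ ≤ 8 * (M * T / σ * arrivalProb f lam t T σ i) := by gcongr
    _ = 8 * M * T / σ * arrivalProb f lam t T σ i := by ring

/-- For every `t ∈ ℝ`, `T > 0` and complex `z` with `|z| ≤ 1`,
`lim_{σ→∞} Σ_{i∈ℤ} p_i·(1 + (z-1)·p_i·∫_0^1 s/(1+(z-1)(1-s)p_i)² ds) = λT`,
where `p_i = p_i(t,t+T) = ∫_t^{t+T} (1/σ) f_ξ((x - i/λ)/σ) dx`. -/
theorem psra_sum_log_expansion_tendsto (lam M : ℝ) (hlam : 0 < lam)
    (f : ℝ → ℝ) (hf_cont : Continuous f) (hf_nonneg : ∀ x, 0 ≤ f x)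
    (hf_int : Integrable f) (hf_prob : ∫ x, f x = 1)
    (hf_bdd : ∀ x, f x ≤ M)
    (hf_var : Integrable (fun x => x ^ 2 * f x))
    (t T : ℝ) (hT : 0 < T) (z : ℂ) (hz : ‖z‖ ≤ 1)
    (p : ℝ → ℤ → ℝ)
    (hp : ∀ σ i, p σ i = ∫ x in t..(t + T), (1 / σ) * f ((x - i / lam) / σ)) :
    Tendsto (fun σ : ℝ => ∑' i : ℤ,
        (p σ i : ℂ) * (1 + (z - 1) * (p σ i : ℂ) *
          ∫ s in (0:ℝ)..1, (s : ℂ) / (1 + (z - 1) * (1 - (s : ℂ)) * (p σ i : ℂ)) ^ 2))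
      atTop (nhds ((lam * T : ℝ) : ℂ)) :=
  psra_sum_log_expansion_tendsto_general lam M hlam f hf_nonneg hf_int hf_prob hf_bdd t T hT z hz p
    hp
end

section
/- Let n₁ = n(t,t+T) and n₂ = n(t+T,t+2T) be the numbers of PSRA arrivals in the consecutive slots (t,t+T] and (t+T,t+2T]. Then Cov(n₁,n₂) = -Σ_{i∈ℤ} p_i(t,t+T)·p_i(t+T,t+2T) ≤ 0; in particular the numbers of PSRA arrivals in disjoint consecutive time slots are negatively correlated. -/
/-!
Write `n₁ = ∑ᵢ 1{tᵢ ∈ (t, t+T]}` and `n₂ = ∑ⱼ 1{tⱼ ∈ (t+T, t+2T]}` and expand `E[n₁ n₂]` as a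
double series. An off-diagonal term `i ≠ j` equals `pᵢ(t,t+T) pⱼ(t+T,t+2T)` by independence, and
a diagonal term vanishes because one arrival cannot lie in two disjoint slots; so
`E[n₁ n₂] + ∑ᵢ pᵢ(t,t+T) pᵢ(t+T,t+2T) = E[n₁] E[n₂]`. Done in `ℝ≥0∞` this needs no
summability. Passing to `ℝ` only needs `E[n₁], E[n₂] < ∞`: since all `ξᵢ` have one law `ν`,
`∑ᵢ P(tᵢ ∈ (a,b]) = ∫ #{i : x + i/λ ∈ (a,b]} dν(x) ≤ λ(b - a) + 1`.
-/

open MeasureTheory ProbabilityTheory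
open scoped ENNReal

lemma tsum_indicator_Ioc_sub_int_div_le {lam : ℝ} (hlam : 0 < lam) {a b : ℝ} (hab : a ≤ b)
    (x : ℝ) :
    ∑' i : ℤ, (Set.Ioc (a - i / lam) (b - i / lam)).indicator (1 : ℝ → ℝ≥0∞) x ≤
      ENNReal.ofReal (lam * (b - a) + 1) := by
  set F := Finset.Ioc ⌊lam * (a - x)⌋ ⌊lam * (b - x)⌋
  have hmem (i : ℤ) : x ∈ Set.Ioc (a - i / lam) (b - i / lam) ↔ i ∈ F := by
    rw [Set.mem_Ioc, Finset.mem_Ioc, Int.floor_lt, Int.le_floor, sub_lt_comm, le_sub_comm,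
      lt_div_iff₀ hlam, div_le_iff₀ hlam, mul_comm lam, mul_comm lam]
  have hcount : ∑' i : ℤ, (Set.Ioc (a - i / lam) (b - i / lam)).indicator (1 : ℝ → ℝ≥0∞) x =
      F.card := by
    calc ∑' i : ℤ, (Set.Ioc (a - i / lam) (b - i / lam)).indicator (1 : ℝ → ℝ≥0∞) x
          = ∑' i : ℤ, (F : Set ℤ).indicator 1 i :=
          tsum_congr fun i => by simp only [Set.indicator_apply, hmem, Finset.mem_coe, Pi.one_apply]
      _ = F.card := by rw [← tsum_subtype]; simp
  have hcard : (F.card : ℝ) ≤ lam * (b - a) + 1 := by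
    rw [Int.card_Ioc, ← Int.cast_natCast, Int.toNat_eq_max, Int.cast_max, Int.cast_zero,
      Int.cast_sub]
    have h₁ := Int.floor_le (lam * (b - x))
    have h₂ := Int.lt_floor_add_one (lam * (a - x))
    exact max_le (by linarith) (by nlinarith)
  rw [hcount, ← ENNReal.ofReal_natCast]
  exact ENNReal.ofReal_le_ofReal hcard

lemma tsum_measure_Ioc_sub_int_div_le (ν : Measure ℝ) {lam : ℝ} (hlam : 0 < lam) {a b : ℝ}
    (hab : a ≤ b) :
    ∑' i : ℤ, ν (Set.Ioc (a - i / lam) (b - i / lam)) ≤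
      ENNReal.ofReal (lam * (b - a) + 1) * ν Set.univ :=
  calc ∑' i : ℤ, ν (Set.Ioc (a - i / lam) (b - i / lam))
      = ∫⁻ x, ∑' i : ℤ, (Set.Ioc (a - i / lam) (b - i / lam)).indicator 1 x ∂ν := by
        rw [lintegral_tsum fun i => (measurable_one.indicator measurableSet_Ioc).aemeasurable]
        simp_rw [lintegral_indicator_one measurableSet_Ioc]
    _ ≤ ∫⁻ _, ENNReal.ofReal (lam * (b - a) + 1) ∂ν :=
        lintegral_mono fun x => tsum_indicator_Ioc_sub_int_div_le hlam hab x
    _ = ENNReal.ofReal (lam * (b - a) + 1) * ν Set.univ := lintegral_const _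

section eventCount

variable {Ω ι : Type*}

noncomputable def eventCount (A : ι → Set Ω) (ω : Ω) : ℝ≥0∞ := ∑' i, (A i).indicator 1 ω

lemma eventCount_toReal (A : ι → Set Ω) (ω : Ω) :
    (eventCount A ω).toReal = ∑' i, (A i).indicator (fun _ => (1 : ℝ)) ω := by
  rw [eventCount, ENNReal.tsum_toReal_eq fun i => by by_cases h : ω ∈ A i <;> simp [h]]
  exact tsum_congr fun i => by by_cases h : ω ∈ A i <;> simp [h]

variable [MeasurableSpace Ω] {P : Measure Ω} {A B : ι → Set Ω}

lemma tsum_tsum_measure_inter_add_tsum_mul (hdisj : ∀ i, Disjoint (A i) (B i))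
    (hindep : Pairwise fun i j => P (A i ∩ B j) = P (A i) * P (B j)) :
    ∑' i, ∑' j, P (A i ∩ B j) + ∑' i, P (A i) * P (B i) = (∑' i, P (A i)) * ∑' j, P (B j) := by
  classical
  rw [← ENNReal.tsum_add, ← ENNReal.tsum_mul_right]
  refine tsum_congr fun i => ?_
  rw [← tsum_ite_eq i fun j => P (A i) * P (B j), ← ENNReal.tsum_add, ← ENNReal.tsum_mul_left]
  refine tsum_congr fun j => ?_
  rcases eq_or_ne j i with rfl | hji
  · simp [(hdisj j).inter_eq]
  · simp [hji, hindep hji.symm]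

variable [Countable ι]

lemma measurable_eventCount (hA : ∀ i, MeasurableSet (A i)) : Measurable (eventCount A) :=
  Measurable.tsum fun i => measurable_one.indicator (hA i)

lemma lintegral_eventCount (hA : ∀ i, MeasurableSet (A i)) :
    ∫⁻ ω, eventCount A ω ∂P = ∑' i, P (A i) := by
  unfold eventCount
  rw [lintegral_tsum fun i => (measurable_one.indicator (hA i)).aemeasurable]
  simp_rw [lintegral_indicator_one (hA _)]

lemma lintegral_eventCount_mul (hA : ∀ i, MeasurableSet (A i)) (hB : ∀ i, MeasurableSet (B i)) :
    ∫⁻ ω, eventCount A ω * eventCount B ω ∂P = ∑' i, ∑' j, P (A i ∩ B j) := by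
  have hAB (i j : ι) : MeasurableSet (A i ∩ B j) := (hA i).inter (hB j)
  have hprod (i j : ι) (ω : Ω) :
      (A i).indicator 1 ω * (B j).indicator 1 ω = (A i ∩ B j).indicator (1 : Ω → ℝ≥0∞) ω := by
    rw [Set.inter_indicator_one, Pi.mul_apply]
  simp_rw [eventCount, ← ENNReal.tsum_mul_right, ← ENNReal.tsum_mul_left, hprod]
  rw [lintegral_tsum fun i => (Measurable.tsum fun j =>
    measurable_one.indicator (hAB i j)).aemeasurable]
  refine tsum_congr fun i => ?_
  rw [lintegral_tsum fun j => (measurable_one.indicator (hAB i j)).aemeasurable]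
  simp_rw [lintegral_indicator_one (hAB i _)]

theorem integral_eventCount_mul_sub_mul (hA : ∀ i, MeasurableSet (A i))
    (hB : ∀ i, MeasurableSet (B i)) (hdisj : ∀ i, Disjoint (A i) (B i))
    (hindep : Pairwise fun i j => P (A i ∩ B j) = P (A i) * P (B j))
    (hA_fin : ∑' i, P (A i) ≠ ∞) (hB_fin : ∑' i, P (B i) ≠ ∞) :
    ∫ ω, (eventCount A ω).toReal * (eventCount B ω).toReal ∂P
        - (∫ ω, (eventCount A ω).toReal ∂P) * ∫ ω, (eventCount B ω).toReal ∂P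
      = -∑' i, P.real (A i) * P.real (B i) := by
  have hA_ae : ∀ᵐ ω ∂P, eventCount A ω < ∞ :=
    ae_lt_top (measurable_eventCount hA) (by rwa [lintegral_eventCount hA])
  have hB_ae : ∀ᵐ ω ∂P, eventCount B ω < ∞ :=
    ae_lt_top (measurable_eventCount hB) (by rwa [lintegral_eventCount hB])
  have hEA : ∫ ω, (eventCount A ω).toReal ∂P = (∑' i, P (A i)).toReal := by
    rw [integral_toReal (measurable_eventCount hA).aemeasurable hA_ae, lintegral_eventCount hA]
  have hEB : ∫ ω, (eventCount B ω).toReal ∂P = (∑' i, P (B i)).toReal := by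
    rw [integral_toReal (measurable_eventCount hB).aemeasurable hB_ae, lintegral_eventCount hB]
  have hEAB : ∫ ω, (eventCount A ω).toReal * (eventCount B ω).toReal ∂P =
      (∑' i, ∑' j, P (A i ∩ B j)).toReal := by
    simp_rw [← ENNReal.toReal_mul]
    have hm : AEMeasurable (fun ω => eventCount A ω * eventCount B ω) P :=
      ((measurable_eventCount hA).mul (measurable_eventCount hB)).aemeasurable
    rw [integral_toReal hm
      (by filter_upwards [hA_ae, hB_ae] with ω h₁ h₂ using ENNReal.mul_lt_top h₁ h₂),
      lintegral_eventCount_mul hA hB]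
  have hdiag : ∑' i, P.real (A i) * P.real (B i) = (∑' i, P (A i) * P (B i)).toReal := by
    rw [ENNReal.tsum_toReal_eq fun i => ENNReal.mul_ne_top
      (ENNReal.ne_top_of_tsum_ne_top hA_fin i) (ENNReal.ne_top_of_tsum_ne_top hB_fin i)]
    simp_rw [ENNReal.toReal_mul, measureReal_def]
  have hsplit := tsum_tsum_measure_inter_add_tsum_mul hdisj hindep
  obtain ⟨hoff_fin, hdiag_fin⟩ :=
    ENNReal.add_ne_top.mp (hsplit ▸ ENNReal.mul_ne_top hA_fin hB_fin)
  rw [hEAB, hEA, hEB, hdiag, ← ENNReal.toReal_mul, ← hsplit,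
    ENNReal.toReal_add hoff_fin hdiag_fin]
  ring

end eventCount

lemma measureReal_withDensity_ofReal_Ioc {g : ℝ → ℝ} {a b : ℝ} (hab : a ≤ b)
    (hg : IntegrableOn g (Set.Ioc a b)) (hg_nonneg : 0 ≤ᵐ[volume.restrict (Set.Ioc a b)] g) :
    (volume.withDensity fun x => ENNReal.ofReal (g x)).real (Set.Ioc a b) =
      ∫ x in a..b, g x := by
  rw [measureReal_def, withDensity_apply _ measurableSet_Ioc,
    ← ofReal_integral_eq_lintegral_ofReal hg hg_nonneg,
    ENNReal.toReal_ofReal (integral_nonneg_of_ae hg_nonneg), intervalIntegral.integral_of_le hab]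

section PSRA

variable {Ω : Type*}

noncomputable def psraArrival (lam : ℝ) (ξ : ℤ → Ω → ℝ) (i : ℤ) : Ω → ℝ :=
  fun ω => i / lam + ξ i ω

lemma psraArrival_preimage_Ioc (lam : ℝ) (ξ : ℤ → Ω → ℝ) (i : ℤ) (a b : ℝ) :
    psraArrival lam ξ i ⁻¹' Set.Ioc a b = ξ i ⁻¹' Set.Ioc (a - i / lam) (b - i / lam) := by
  rw [← Set.preimage_const_add_Ioc]
  rfl

variable [MeasurableSpace Ω] {P : Measure Ω}

lemma measurable_psraArrival {lam : ℝ} {ξ : ℤ → Ω → ℝ} {i : ℤ} (hξ : Measurable (ξ i)) :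
    Measurable (psraArrival lam ξ i) :=
  measurable_const.add hξ

lemma iIndepFun_psraArrival {lam : ℝ} {ξ : ℤ → Ω → ℝ} (hξ : iIndepFun ξ P) :
    iIndepFun (psraArrival lam ξ) P :=
  hξ.comp (fun i x => i / lam + x) fun _ => measurable_const_add _

lemma tsum_measure_psraArrival_mem_Ioc_ne_top {lam : ℝ} (hlam : 0 < lam) {ξ : ℤ → Ω → ℝ}
    (hξ : ∀ i, Measurable (ξ i)) {ν : Measure ℝ} [IsFiniteMeasure ν]
    (hlaw : ∀ i, P.map (ξ i) = ν) {a b : ℝ} (hab : a ≤ b) :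
    ∑' i, P (psraArrival lam ξ i ⁻¹' Set.Ioc a b) ≠ ∞ := by
  simp_rw [psraArrival_preimage_Ioc, ← Measure.map_apply (hξ _) measurableSet_Ioc, hlaw]
  exact ne_top_of_le_ne_top (ENNReal.mul_ne_top ENNReal.ofReal_ne_top (measure_ne_top ν _))
    (tsum_measure_Ioc_sub_int_div_le ν hlam hab)

lemma measureReal_psraArrival_mem_Ioc {lam : ℝ} {ξ : ℤ → Ω → ℝ} {i : ℤ} (hξ : Measurable (ξ i))
    {g : ℝ → ℝ} (hg : Continuous g) (hg_nonneg : ∀ x, 0 ≤ g x)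
    (hlaw : P.map (ξ i) = volume.withDensity fun x => ENNReal.ofReal (g x)) {a b : ℝ}
    (hab : a ≤ b) :
    P.real (psraArrival lam ξ i ⁻¹' Set.Ioc a b) = ∫ x in a..b, g (x - i / lam) := by
  rw [psraArrival_preimage_Ioc, ← map_measureReal_apply hξ measurableSet_Ioc, hlaw,
    measureReal_withDensity_ofReal_Ioc (by linarith) hg.integrableOn_Ioc
      (Filter.Eventually.of_forall hg_nonneg), intervalIntegral.integral_comp_sub_right]

end PSRA

theorem psra_negative_covariance_general {Ω : Type*} [MeasurableSpace Ω]
    (P : Measure Ω) [IsProbabilityMeasure P]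
    (lam σ : ℝ) (hlam : 0 < lam) (hσ : 0 < σ)
    (f : ℝ → ℝ) (hf_cont : Continuous f) (hf_nonneg : ∀ x, 0 ≤ f x)
    (ξ : ℤ → Ω → ℝ) (hmeas : ∀ i, Measurable (ξ i))
    (hindep : iIndepFun ξ P)
    (hlaw : ∀ i : ℤ, P.map (ξ i) =
      volume.withDensity (fun x => ENNReal.ofReal ((1 / σ) * f (x / σ))))
    (t T : ℝ) (hT : 0 < T)
    (p₁ p₂ : ℤ → ℝ)
    (hp₁ : ∀ i, p₁ i = ∫ x in t..(t + T), (1 / σ) * f ((x - i / lam) / σ))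
    (hp₂ : ∀ i, p₂ i = ∫ x in (t + T)..(t + 2 * T), (1 / σ) * f ((x - i / lam) / σ))
    (N₁ N₂ : Ω → ℝ)
    (hN₁ : ∀ ω, N₁ ω = ∑' i : ℤ,
      Set.indicator (Set.Ioc t (t + T)) (fun _ => (1 : ℝ)) ((i : ℝ) / lam + ξ i ω))
    (hN₂ : ∀ ω, N₂ ω = ∑' i : ℤ,
      Set.indicator (Set.Ioc (t + T) (t + 2 * T)) (fun _ => (1 : ℝ)) ((i : ℝ) / lam + ξ i ω)) :
    (∫ ω, N₁ ω * N₂ ω ∂P) - (∫ ω, N₁ ω ∂P) * (∫ ω, N₂ ω ∂P) =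
      -∑' i : ℤ, p₁ i * p₂ i ∧
    (∫ ω, N₁ ω * N₂ ω ∂P) - (∫ ω, N₁ ω ∂P) * (∫ ω, N₂ ω ∂P) ≤ 0 := by
  set ν := volume.withDensity fun x => ENNReal.ofReal ((1 / σ) * f (x / σ))
  have : IsFiniteMeasure ν := hlaw 0 ▸ inferInstance
  set A := fun i => psraArrival lam ξ i ⁻¹' Set.Ioc t (t + T)
  set B := fun i => psraArrival lam ξ i ⁻¹' Set.Ioc (t + T) (t + 2 * T)
  have hg : Continuous fun x => (1 / σ) * f (x / σ) := by fun_prop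
  have hg_nonneg (x : ℝ) : 0 ≤ (1 / σ) * f (x / σ) :=
    mul_nonneg (by positivity) (hf_nonneg _)
  have hA (i : ℤ) : P.real (A i) = p₁ i := by
    rw [hp₁, measureReal_psraArrival_mem_Ioc (hmeas i) hg hg_nonneg (hlaw i) (by linarith)]
  have hB (i : ℤ) : P.real (B i) = p₂ i := by
    rw [hp₂, measureReal_psraArrival_mem_Ioc (hmeas i) hg hg_nonneg (hlaw i) (by linarith)]
  have hN₁A : N₁ = fun ω => (eventCount A ω).toReal := funext fun ω => by
    rw [hN₁, eventCount_toReal]; rfl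
  have hN₂B : N₂ = fun ω => (eventCount B ω).toReal := funext fun ω => by
    rw [hN₂, eventCount_toReal]; rfl
  have hcov := integral_eventCount_mul_sub_mul (P := P) (A := A) (B := B)
    (fun i => measurable_psraArrival (hmeas i) measurableSet_Ioc)
    (fun i => measurable_psraArrival (hmeas i) measurableSet_Ioc)
    (fun i => (Set.Ioc_disjoint_Ioc_of_le le_rfl).preimage _)
    (fun i j hij => ((iIndepFun_psraArrival hindep).indepFun hij).measure_inter_preimage_eq_mul
      _ _ measurableSet_Ioc measurableSet_Ioc)
    (tsum_measure_psraArrival_mem_Ioc_ne_top hlam hmeas hlaw (by linarith))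
    (tsum_measure_psraArrival_mem_Ioc_ne_top hlam hmeas hlaw (by linarith))
  simp only [hA, hB] at hcov
  rw [hN₁A, hN₂B, hcov]
  refine ⟨rfl, neg_nonpos.mpr (tsum_nonneg fun i => ?_)⟩
  rw [← hA, ← hB]
  positivity

/-- Let `n₁ = n(t,t+T)` and `n₂ = n(t+T,t+2T)` be the numbers of PSRA
arrivals (`t_i = i/λ + ξ_i`, `ξ_i` independent with density `(1/σ) f_ξ(·/σ)`) in the
consecutive slots `(t,t+T]` and `(t+T,t+2T]`. Then
`Cov(n₁,n₂) = -Σ_{i∈ℤ} p_i(t,t+T)·p_i(t+T,t+2T) ≤ 0`: the numbers of arrivals in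
disjoint consecutive time slots are negatively correlated. -/
theorem psra_negative_covariance {Ω : Type*} [MeasurableSpace Ω]
    (P : Measure Ω) [IsProbabilityMeasure P]
    (lam σ M : ℝ) (hlam : 0 < lam) (hσ : 0 < σ)
    (f : ℝ → ℝ) (hf_cont : Continuous f) (hf_nonneg : ∀ x, 0 ≤ f x)
    (hf_int : Integrable f) (hf_prob : ∫ x, f x = 1) (hf_bdd : ∀ x, f x ≤ M)
    (ξ : ℤ → Ω → ℝ) (hmeas : ∀ i, Measurable (ξ i))
    (hindep : iIndepFun ξ P)
    (hlaw : ∀ i : ℤ, P.map (ξ i) =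
      volume.withDensity (fun x => ENNReal.ofReal ((1 / σ) * f (x / σ))))
    (t T : ℝ) (hT : 0 < T)
    (p₁ p₂ : ℤ → ℝ)
    (hp₁ : ∀ i, p₁ i = ∫ x in t..(t + T), (1 / σ) * f ((x - i / lam) / σ))
    (hp₂ : ∀ i, p₂ i = ∫ x in (t + T)..(t + 2 * T), (1 / σ) * f ((x - i / lam) / σ))
    (N₁ N₂ : Ω → ℝ)
    (hN₁ : ∀ ω, N₁ ω = ∑' i : ℤ,
      Set.indicator (Set.Ioc t (t + T)) (fun _ => (1 : ℝ)) ((i : ℝ) / lam + ξ i ω))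
    (hN₂ : ∀ ω, N₂ ω = ∑' i : ℤ,
      Set.indicator (Set.Ioc (t + T) (t + 2 * T)) (fun _ => (1 : ℝ)) ((i : ℝ) / lam + ξ i ω)) :
    (∫ ω, N₁ ω * N₂ ω ∂P) - (∫ ω, N₁ ω ∂P) * (∫ ω, N₂ ω ∂P) =
      -∑' i : ℤ, p₁ i * p₂ i ∧
    (∫ ω, N₁ ω * N₂ ω ∂P) - (∫ ω, N₁ ω ∂P) * (∫ ω, N₂ ω ∂P) ≤ 0 :=
  psra_negative_covariance_general P lam σ hlam hσ f hf_cont hf_nonneg ξ hmeas hindep hlaw t T hT p₁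
    p₂ hp₁ hp₂ N₁ N₂ hN₁ hN₂
end
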